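/- arXiv:1907.01454 — 2 statements merged into one kernel-verified Lean document; each statement's English description precedes it below -/
import Mathlib

section
/- Let X be a Δ-generated topological space and let r be an equivalence relation on X. Then the quotient space X/r, equipped with the quotient topology, is Δ-Hausdorff if and only if the set {(x,y) ∈ X × X : x r y} is a closed subset of the Δ-kelleyfication of the product space X × X. -/
/-!
A Δ-Hausdorff space need not be Hausdorff, but curves into it still have unique limits in the
following sense: if `β : ℝ → Q` is continuous and maps compact intervals to closed sets,
`t k → t₀` and `y` is a cluster point of `β (t k)`, then `y ∈ β '' [t₀ - ε, t₀ + ε]` for every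
`ε > 0`; as the fibre `β ⁻¹' {y}` is closed, `β t₀ = y`.

Closedness in `ℝⁿ` can be tested along curves: a point of `closure S` is `γ 0` for a continuous
`γ : ℝ → ℝⁿ` with every `γ (1 / (k + 1)) ∈ S`. For `⇒`, the preimage of the graph of `r` under
`p : ℝⁿ → X × X` is the coincidence set of two maps into `X/r`, closed by the above. For `⇐`,
the `r`-saturation of `γ '' K` (`K ⊆ ℝ` compact) is closed in `X`, being the projection along the
compact factor `K` of a closed subset of `K × ℝⁿ`. So `X → X/r` composed with a curve maps
intervals to closed sets, and for a path `f` in `X/r`, compactness of `[0,1]` supplies the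
cluster point that shows `p ⁻¹' (X → X/r) ⁻¹' range f` to be closed.
-/

open Topology

/-- A topological space `X` is *Δ-Hausdorff* if the image of every continuous map
`[0,1] → X` is closed in `X`. -/
def DeltaHausdorff (X : Type*) [TopologicalSpace X] : Prop :=
  ∀ f : C(unitInterval, X), IsClosed (Set.range f)

open Filter Set TopologicalSpace

/- The tent of height `1` over the node `1 / (n + 1)`, of half-width `1 / ((n + 1) * (n + 2))`
(the gap to the next node), so that it vanishes at `0` and at every other node `1 / (k + 1)`. -/
noncomputable def invSuccTent (n : ℕ) (u : ℝ) : ℝ :=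
  max 0 (1 - |((n : ℝ) + 1) * ((n : ℝ) + 2) * u - ((n : ℝ) + 2)|)

namespace invSuccTent

lemma continuous (n : ℕ) : Continuous (invSuccTent n) := by
  unfold invSuccTent; fun_prop

lemma abs_le_one (n : ℕ) (u : ℝ) : |invSuccTent n u| ≤ 1 := by
  rw [abs_of_nonneg (le_max_left _ _)]
  exact max_le zero_le_one (sub_le_self _ (abs_nonneg _))

lemma eq_zero_of_one_le {n : ℕ} {u : ℝ}
    (h : 1 ≤ |((n : ℝ) + 1) * ((n : ℝ) + 2) * u - ((n : ℝ) + 2)|) : invSuccTent n u = 0 :=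
  max_eq_left (by linarith)

lemma apply_zero (n : ℕ) : invSuccTent n 0 = 0 :=
  eq_zero_of_one_le (by rw [mul_zero, zero_sub, abs_neg, abs_of_pos (by positivity)]; linarith)

lemma apply_one_div_succ (n k : ℕ) :
    invSuccTent n (1 / ((k : ℝ) + 1)) = if k = n then 1 else 0 := by
  split_ifs with hkn
  · subst hkn
    have hnode : ((k : ℝ) + 1) * ((k : ℝ) + 2) * (1 / ((k : ℝ) + 1)) = (k : ℝ) + 2 := by
      field_simp
    rw [invSuccTent, hnode, sub_self, abs_zero, sub_zero, max_eq_right zero_le_one]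
  · apply eq_zero_of_one_le
    have hk : (0 : ℝ) < k + 1 := by positivity
    rcases Nat.lt_or_gt_of_ne hkn with hlt | hlt
    · have hle : (k : ℝ) + 1 ≤ n := by exact_mod_cast hlt
      refine le_abs.2 (Or.inl ?_)
      rw [mul_one_div, le_sub_iff_add_le, le_div_iff₀ hk]
      nlinarith
    · have hle : (n : ℝ) + 2 ≤ k + 1 := by exact_mod_cast Nat.succ_le_succ hlt
      refine le_abs.2 (Or.inr ?_)
      rw [mul_one_div, neg_sub, le_sub_iff_add_le, ← le_sub_iff_add_le', div_le_iff₀ hk]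
      nlinarith

end invSuccTent

theorem exists_curve_of_mem_closure {E : Type*} [NormedAddCommGroup E] [NormedSpace ℝ E]
    [CompleteSpace E] {S : Set E} {l : E} (hl : l ∈ closure S) :
    ∃ γ : ℝ → E, Continuous γ ∧ γ 0 = l ∧ ∀ k : ℕ, γ (1 / ((k : ℝ) + 1)) ∈ S := by
  -- Points within `(1 / 2) ^ n` of `l` make the series below converge uniformly.
  have hx : ∀ n : ℕ, ∃ x ∈ S, dist l x < (1 / 2) ^ n := fun n =>
    Metric.mem_closure_iff.1 hl _ (by positivity)
  choose x hxS hxl using hx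
  refine ⟨fun u => l + ∑' n, invSuccTent n u • (x n - l), ?_, ?_, fun k => ?_⟩
  · refine continuous_const.add (continuous_tsum (fun n => (invSuccTent.continuous n).smul
      continuous_const) summable_geometric_two fun n u => ?_)
    rw [norm_smul, Real.norm_eq_abs, ← dist_eq_norm, dist_comm]
    exact (mul_le_of_le_one_left dist_nonneg (invSuccTent.abs_le_one n u)).trans (hxl n).le
  · simp [invSuccTent.apply_zero]
  · simp_rw [invSuccTent.apply_one_div_succ, ite_smul, one_smul, zero_smul]
    simpa using hxS k

theorem eq_of_mapClusterPt_of_isClosed_image_Icc {Q : Type*} [TopologicalSpace Q] {β : ℝ → Q}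
    (hβc : Continuous β) (hβ : ∀ a b, IsClosed (β '' Icc a b)) {ι : Type*} {l : Filter ι}
    {t : ι → ℝ} {t₀ : ℝ} {y : Q} (ht : Tendsto t l (𝓝 t₀)) (hy : MapClusterPt y l (β ∘ t)) :
    β t₀ = y := by
  have hmem : ∀ ε > 0, y ∈ β '' Metric.closedBall t₀ ε := fun ε hε => by
    rw [Real.closedBall_eq_Icc]
    refine (hβ _ _).mem_of_mapClusterPt hy ?_
    filter_upwards [ht (Real.closedBall_eq_Icc ▸ Metric.closedBall_mem_nhds t₀ hε)] with i hi
    exact mem_image_of_mem β hi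
  obtain ⟨s, -, rfl⟩ := hmem 1 one_pos
  -- `{β s}` is the image of the degenerate interval `Icc s s`.
  have hfiber : IsClosed (β ⁻¹' {β s}) := by
    simpa using (hβ s s).preimage hβc
  refine hfiber.closure_subset (Metric.mem_closure_iff.2 fun ε hε => ?_)
  obtain ⟨u, hu, hus⟩ := hmem (ε / 2) (half_pos hε)
  exact ⟨u, hus, (Metric.mem_closedBall'.1 hu).trans_lt (half_lt_self hε)⟩

theorem DeltaHausdorff.isClosed_image_Icc {Q : Type*} [TopologicalSpace Q] (hQ : DeltaHausdorff Q)
    {β : ℝ → Q} (hβ : Continuous β) (a b : ℝ) : IsClosed (β '' Icc a b) := by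
  rcases le_or_gt a b with hab | hab
  · have hpath := hQ ⟨fun t => β (AffineMap.lineMap a b (t : ℝ)), by fun_prop⟩
    have hrange : range (fun t : unitInterval => β (AffineMap.lineMap a b (t : ℝ))) =
        β '' Icc a b := by
      rw [← segment_eq_Icc hab, segment_eq_image_lineMap, image_image]
      exact (range_comp (fun x => β (AffineMap.lineMap a b x)) ((↑) : unitInterval → ℝ)).trans
        (congrArg _ Subtype.range_coe)
    rwa [ContinuousMap.coe_mk, hrange] at hpath
  · simp [Icc_eq_empty_of_lt hab]

theorem DeltaHausdorff.isClosed_setOf_eq {Q : Type*} [TopologicalSpace Q] (hQ : DeltaHausdorff Q)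
    {E : Type*} [NormedAddCommGroup E] [NormedSpace ℝ E] [CompleteSpace E] {g h : E → Q}
    (hg : Continuous g) (hh : Continuous h) : IsClosed {z | g z = h z} := by
  refine closure_subset_iff_isClosed.1 fun l hl => ?_
  obtain ⟨γ, hγ, rfl, hγS⟩ := exists_curve_of_mem_closure hl
  have hconv : Tendsto (fun k : ℕ => 1 / ((k : ℝ) + 1)) atTop (𝓝 0) :=
    tendsto_one_div_add_atTop_nhds_zero_nat
  have hgγ : Tendsto (h ∘ γ ∘ fun k : ℕ => 1 / ((k : ℝ) + 1)) atTop (𝓝 (g (γ 0))) :=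
    (((hg.comp hγ).tendsto 0).comp hconv).congr hγS
  exact (eq_of_mapClusterPt_of_isClosed_image_Icc (hh.comp hγ)
    (hQ.isClosed_image_Icc (hh.comp hγ)) hconv hgγ.mapClusterPt).symm

theorem isClosed_deltaGenerated_iff {Z : Type*} [TopologicalSpace Z] {S : Set Z} :
    IsClosed[deltaGenerated Z] S ↔ ∀ (n : ℕ) (p : C(Fin n → ℝ, Z)), IsClosed (p ⁻¹' S) := by
  rw [← @isOpen_compl_iff _ _ (deltaGenerated Z)]
  simp only [isOpen_iSup_iff, isOpen_coinduced, Sigma.forall, preimage_compl,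
    isOpen_compl_iff]

theorem IsClosed.preimage_of_deltaGenerated {Y Z : Type*} [TopologicalSpace Y]
    [DeltaGeneratedSpace Y] [TopologicalSpace Z] {S : Set Z} (hS : IsClosed[deltaGenerated Z] S)
    {w : Y → Z} (hw : Continuous w) : IsClosed (w ⁻¹' S) :=
  (IsGeneratedBy.isClosed_iff (fun n => Fin n → ℝ)).2 fun n p =>
    isClosed_deltaGenerated_iff.1 hS n ((⟨w, hw⟩ : C(Y, Z)).comp p)

instance (n : ℕ) : DeltaGeneratedSpace (ℝ × (Fin n → ℝ)) :=
  (Fin.consEquivL ℝ fun _ => ℝ).toHomeomorph.symm.isQuotientMap.isGeneratedBy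

theorem isClosed_mk_image_image_of_isCompact {X : Type*} [TopologicalSpace X]
    [DeltaGeneratedSpace X] {r : Setoid X}
    (hr : IsClosed[deltaGenerated (X × X)] {p : X × X | r.r p.1 p.2}) {γ : ℝ → X}
    (hγ : Continuous γ) {K : Set ℝ} (hK : IsCompact K) :
    IsClosed (Quotient.mk r '' (γ '' K)) := by
  have : CompactSpace K := isCompact_iff_compactSpace.1 hK
  rw [← (isQuotientMap_quotient_mk' (s := r)).isClosed_preimage,
    IsGeneratedBy.isClosed_iff (fun n => Fin n → ℝ)]
  intro n p
  have hpairs : IsClosed {w : K × (Fin n → ℝ) | r.r (p w.2) (γ w.1)} :=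
    (hr.preimage_of_deltaGenerated (w := fun v : ℝ × (Fin n → ℝ) => (p v.2, γ v.1))
      (by fun_prop)).preimage (continuous_subtype_val.prodMap continuous_id)
  convert isClosedMap_snd_of_compactSpace _ hpairs using 1
  ext z
  simp [Quotient.mk', Quotient.eq, Setoid.comm']

theorem isClosed_preimage_range_of_isClosed_image_Icc {E Q T : Type*} [NormedAddCommGroup E]
    [NormedSpace ℝ E] [CompleteSpace E] [TopologicalSpace Q] [TopologicalSpace T] [CompactSpace T]
    {g : E → Q} (hg : Continuous g)
    (hgI : ∀ γ : ℝ → E, Continuous γ → ∀ a b, IsClosed ((g ∘ γ) '' Icc a b))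
    {f : T → Q} (hf : Continuous f) : IsClosed (g ⁻¹' range f) := by
  refine closure_subset_iff_isClosed.1 fun l hl => ?_
  obtain ⟨γ, hγ, rfl, hγS⟩ := exists_curve_of_mem_closure hl
  choose s hs using hγS
  obtain ⟨s₀, -, hs₀⟩ := isCompact_univ.exists_mapClusterPt (f := atTop) (u := s) (by simp)
  have hcomp : f ∘ s = (g ∘ γ) ∘ fun k : ℕ => 1 / ((k : ℝ) + 1) := funext hs
  refine ⟨s₀, (eq_of_mapClusterPt_of_isClosed_image_Icc (hg.comp hγ) (hgI γ hγ)
    tendsto_one_div_add_atTop_nhds_zero_nat ?_).symm⟩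
  exact hcomp ▸ hs₀.continuousAt_comp hf.continuousAt

/-- Let `r` be an equivalence relation on a Δ-generated space `X`.  The quotient space
`X/r` with the quotient topology is Δ-Hausdorff iff the graph of `r` is closed in the
Δ-kelleyfication of the product `X × X`. -/
theorem deltaHausdorff_quotient_setoid_iff
    {X : Type*} [TopologicalSpace X] [DeltaGeneratedSpace X] (r : Setoid X) :
    DeltaHausdorff (Quotient r) ↔
      IsClosed[TopologicalSpace.deltaGenerated (X × X)] {p : X × X | r.r p.1 p.2} := by
  constructor
  · intro hQ
    refine isClosed_deltaGenerated_iff.2 fun n p => ?_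
    have hcoinc := hQ.isClosed_setOf_eq (g := fun z => Quotient.mk r (p z).1)
      (h := fun z => Quotient.mk r (p z).2) (continuous_quotient_mk'.comp p.continuous.fst)
      (continuous_quotient_mk'.comp p.continuous.snd)
    simp only [Quotient.eq] at hcoinc
    exact hcoinc
  · intro hr f
    rw [← (isQuotientMap_quotient_mk' (s := r)).isClosed_preimage,
      IsGeneratedBy.isClosed_iff (fun n => Fin n → ℝ)]
    refine fun n p => isClosed_preimage_range_of_isClosed_image_Icc
      (continuous_quotient_mk'.comp p.continuous) (fun γ hγ a b => ?_) f.continuous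
    rw [Function.comp_assoc, image_comp]
    exact isClosed_mk_image_image_of_isCompact hr (p.continuous.comp hγ) isCompact_Icc
end

section
/- Let X be a Δ-generated topological space. Then X is Δ-Hausdorff if and only if X has unique sequential limits, i.e., for every sequence x : ℕ → X and all points a, b ∈ X, if x converges to a and x converges to b, then a = b. -/
/-!
Unique sequential limits make every sequentially compact set sequentially closed, hence closed in
the sequential space `X`; the image of `[0,1]` is sequentially compact. Conversely, if all
sequentially compact sets are closed, then points are closed and a convergent sequence together
with one limit `a` is closed; a second limit `b ≠ a` is avoided by a tail of the sequence, yet lies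
in the closed set formed by that tail and `a`.

So everything rests on showing that in a Δ-Hausdorff Δ-generated space a sequentially compact `K`
is closed, i.e. `p⁻¹ K` is sequentially closed for each continuous `p : ℝⁿ → X`. If `tₖ → τ` and
`p tₖ → c`, run a curve `γ` from `τ` through a fast subsequence of `tₖ`. The image under `p ∘ γ` of
each short interval at `0` is closed and contains a tail of `p tₖ`, hence `c`; so `c` is attained
arbitrarily close to `p τ`, and `p τ = c` because points are closed.
-/

open Filter Topology

open Set

section SequentialLimits

variable {X : Type*} [TopologicalSpace X]

theorem Filter.Tendsto.isSeqCompact_insert_range {x : ℕ → X} {a : X}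
    (hx : Tendsto x atTop (𝓝 a)) : IsSeqCompact (insert a (range x)) := by
  intro y hy
  by_cases hrep : ∃ c, ∃ᶠ k in atTop, y k = c
  · obtain ⟨c, hc⟩ := hrep
    obtain ⟨φ, hφ, hyφ⟩ := extraction_of_frequently_atTop hc
    refine ⟨c, hyφ 0 ▸ hy (φ 0), φ, hφ, ?_⟩
    simpa only [Function.comp_def, hyφ] using tendsto_const_nhds
  · simp only [not_exists, not_frequently] at hrep
    refine ⟨a, mem_insert a _, id, strictMono_id, fun U hU => ?_⟩
    change ∀ᶠ k in atTop, y k ∈ U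
    have hout : {n | x n ∉ U}.Finite :=
      eventually_cofinite.1 (Nat.cofinite_eq_atTop ▸ hx.eventually_mem hU)
    have hfin : (range x \ U).Finite :=
      (hout.image x).subset (by rintro _ ⟨⟨n, rfl⟩, hn⟩; exact mem_image_of_mem x hn)
    filter_upwards [(eventually_all_finite hfin).2 fun c _ => hrep c] with k hk
    by_contra hkU
    rcases hy k with hya | hyx
    · exact hkU (hya ▸ mem_of_mem_nhds hU)
    · exact hk (y k) ⟨hyx, hkU⟩ rfl

theorem IsSeqCompact.isSeqClosed_of_tendsto_unique
    (hX : ∀ (x : ℕ → X) (a b : X), Tendsto x atTop (𝓝 a) → Tendsto x atTop (𝓝 b) → a = b)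
    {K : Set X} (hK : IsSeqCompact K) : IsSeqClosed K := by
  intro x l hxK hxl
  obtain ⟨a, haK, φ, hφ, hxa⟩ := hK hxK
  rwa [hX _ _ _ (hxl.comp hφ.tendsto_atTop) hxa]

theorem tendsto_nhds_unique_of_forall_isSeqCompact_isClosed
    (hX : ∀ K : Set X, IsSeqCompact K → IsClosed K) {x : ℕ → X} {a b : X}
    (ha : Tendsto x atTop (𝓝 a)) (hb : Tendsto x atTop (𝓝 b)) : a = b := by
  have : T1Space X := ⟨fun c => hX {c} fun y hy => by
    obtain rfl : y = fun _ => c := funext hy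
    exact ⟨c, rfl, id, strictMono_id, tendsto_const_nhds⟩⟩
  by_contra hab
  obtain ⟨N, hN⟩ := eventually_atTop.1 (ha.eventually_ne hab)
  have hshift := tendsto_add_atTop_nat N
  have hK := hX _ (ha.comp hshift).isSeqCompact_insert_range
  rcases hK.mem_of_tendsto (hb.comp hshift)
    (Eventually.of_forall fun n => mem_insert_of_mem _ (mem_range_self n)) with hba | ⟨n, hn⟩
  · exact hab hba.symm
  · exact hN (n + N) (Nat.le_add_left N n) hn

end SequentialLimits

noncomputable def tent (r : ℝ) : ℝ := max 0 (1 - 2 * |r - 1|)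

theorem continuous_tent : Continuous tent := by
  unfold tent; fun_prop

theorem abs_tent_le_one (r : ℝ) : |tent r| ≤ 1 := by
  rw [abs_of_nonneg (le_max_left _ _)]
  exact max_le zero_le_one (by linarith [abs_nonneg (r - 1)])

theorem tent_one : tent 1 = 1 := by
  simp [tent]

theorem tent_eq_zero {r : ℝ} (hr : 1 / 2 ≤ |r - 1|) : tent r = 0 :=
  max_eq_left (by linarith)

theorem tent_zero : tent 0 = 0 :=
  tent_eq_zero (by norm_num)

theorem tent_two_pow_div_two_pow {j k : ℕ} (hjk : j ≠ k) : tent (2 ^ k / 2 ^ j) = 0 := by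
  apply tent_eq_zero
  have hj : (0 : ℝ) < 2 ^ j := by positivity
  rcases hjk.lt_or_gt with hlt | hlt
  · have : (2 : ℝ) ^ (j + 1) ≤ 2 ^ k := pow_le_pow_right₀ one_le_two hlt
    rw [pow_succ] at this
    have : 2 ≤ (2 : ℝ) ^ k / 2 ^ j := by rw [le_div_iff₀ hj]; linarith
    rw [abs_of_nonneg (by linarith)]; linarith
  · have : (2 : ℝ) ^ (k + 1) ≤ 2 ^ j := pow_le_pow_right₀ one_le_two hlt
    rw [pow_succ] at this
    have : (2 : ℝ) ^ k / 2 ^ j ≤ 1 / 2 := by rw [div_le_iff₀ hj]; linarith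
    rw [abs_of_nonpos (by linarith)]; linarith

theorem Filter.Tendsto.exists_curve_through_subseq {E : Type*} [NormedAddCommGroup E]
    [NormedSpace ℝ E] [CompleteSpace E] {t : ℕ → E} {τ : E} (ht : Tendsto t atTop (𝓝 τ)) :
    ∃ (γ : ℝ → E) (σ : ℕ → ℝ) (φ : ℕ → ℕ), Continuous γ ∧ γ 0 = τ ∧
      Tendsto σ atTop (𝓝 0) ∧ StrictMono φ ∧ ∀ k, γ (σ k) = t (φ k) := by
  -- On the support of `tent (2 ^ k * ·)`, an interval around `2⁻ᵏ`, the curve goes from `τ` to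
  -- `t (φ k)` and back; these supports are disjoint, and `‖t (φ k) - τ‖ ≤ 2⁻ᵏ` makes the series
  -- converge uniformly.
  obtain ⟨φ, hφ, hfast⟩ : ∃ φ : ℕ → ℕ, StrictMono φ ∧ ∀ k, ‖t (φ k) - τ‖ ≤ (1 / 2) ^ k :=
    extraction_forall_of_eventually fun k =>
      (ht.eventually_mem (Metric.closedBall_mem_nhds τ (pow_pos one_half_pos k))).mono
        fun n hn => mem_closedBall_iff_norm.1 hn
  set u : ℕ → ℝ → E := fun k s => tent (2 ^ k * s) • (t (φ k) - τ)
  have hu : ∀ k s, ‖u k s‖ ≤ (1 / 2) ^ k := fun k s => by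
    rw [norm_smul, Real.norm_eq_abs]
    exact (mul_le_of_le_one_left (norm_nonneg _) (abs_tent_le_one _)).trans (hfast k)
  refine ⟨fun s => τ + ∑' k, u k s, fun k => (2 ^ k)⁻¹, φ,
    continuous_const.add (continuous_tsum (fun k => ?_) summable_geometric_two hu), ?_, ?_, hφ,
    fun k => ?_⟩
  · exact (continuous_tent.comp (continuous_const.mul continuous_id)).smul continuous_const
  · simp [u, tent_zero]
  · simpa using tendsto_pow_atTop_nhds_zero_of_lt_one (by norm_num : (0 : ℝ) ≤ 1 / 2) (by norm_num)
  · show τ + ∑' j, u j (2 ^ k)⁻¹ = t (φ k)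
    rw [tsum_eq_single k fun j hj => by
      simp [u, ← div_eq_mul_inv, tent_two_pow_div_two_pow hj.symm]]
    simp [u, tent_one]

namespace DeltaHausdorff

variable {X : Type*} [TopologicalSpace X]

theorem t1Space (h : DeltaHausdorff X) : T1Space X :=
  ⟨fun c => range_const (ι := unitInterval) ▸ h (.const unitInterval c)⟩

theorem isClosed_image_Icc_s16 (h : DeltaHausdorff X) {q : ℝ → X} (hq : Continuous q) {a b : ℝ}
    (hab : a ≤ b) : IsClosed (q '' Icc a b) := by
  rw [← segment_eq_Icc hab, ← Path.range_segment, ← range_comp]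
  exact h ⟨q ∘ Path.segment a b, by fun_prop⟩

theorem eq_of_tendsto_comp_real (h : DeltaHausdorff X) {q : ℝ → X} (hq : Continuous q)
    {s : ℕ → ℝ} {s₀ : ℝ} {c : X} (hs : Tendsto s atTop (𝓝 s₀))
    (hqs : Tendsto (q ∘ s) atTop (𝓝 c)) : q s₀ = c := by
  have := h.t1Space
  have hmem : ∀ ε > 0, c ∈ q '' Metric.closedBall s₀ ε := fun ε hε => by
    refine (Real.closedBall_eq_Icc ▸ h.isClosed_image_Icc_s16 hq (by linarith)).mem_of_tendsto hqs ?_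
    exact (hs.eventually_mem (Metric.closedBall_mem_nhds s₀ hε)).mono fun k => mem_image_of_mem q
  rw [← mem_singleton_iff, ← closure_singleton]
  refine mem_closure_iff_nhds.2 fun V hV => ?_
  obtain ⟨ε, hε, hball⟩ :=
    Metric.nhds_basis_closedBall.mem_iff.1 (hq.continuousAt.preimage_mem_nhds hV)
  obtain ⟨u, hu, rfl⟩ := hmem ε hε
  exact ⟨q u, hball hu, rfl⟩

theorem eq_of_tendsto_comp (h : DeltaHausdorff X) {E : Type*} [NormedAddCommGroup E]
    [NormedSpace ℝ E] [CompleteSpace E] {p : E → X} (hp : Continuous p) {t : ℕ → E} {τ : E}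
    {c : X} (ht : Tendsto t atTop (𝓝 τ)) (hpt : Tendsto (p ∘ t) atTop (𝓝 c)) : p τ = c := by
  obtain ⟨γ, σ, φ, hγ, hγ0, hσ, hφ, hγσ⟩ := ht.exists_curve_through_subseq
  rw [← hγ0]
  refine h.eq_of_tendsto_comp_real (hp.comp hγ) hσ ?_
  convert hpt.comp hφ.tendsto_atTop using 1
  ext k
  simp [hγσ]

theorem isClosed_of_isSeqCompact [DeltaGeneratedSpace X] (h : DeltaHausdorff X) {K : Set X}
    (hK : IsSeqCompact K) : IsClosed K := by
  rw [IsGeneratedBy.isClosed_iff (fun n ↦ Fin n → ℝ)]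
  intro n p
  refine IsSeqClosed.isClosed fun t τ htK ht => ?_
  obtain ⟨c, hcK, φ, hφ, hpc⟩ := hK (x := p ∘ t) htK
  rwa [mem_preimage, h.eq_of_tendsto_comp p.continuous (ht.comp hφ.tendsto_atTop) hpc]

end DeltaHausdorff

/-- A Δ-generated space is Δ-Hausdorff iff it has unique sequential limits. -/
theorem deltaHausdorff_iff_unique_seq_limits
    (X : Type*) [TopologicalSpace X] [DeltaGeneratedSpace X] :
    DeltaHausdorff X ↔
      ∀ (x : ℕ → X) (a b : X),
        Tendsto x atTop (𝓝 a) → Tendsto x atTop (𝓝 b) → a = b := by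
  refine ⟨fun h _ _ _ => tendsto_nhds_unique_of_forall_isSeqCompact_isClosed
    fun _ => h.isClosed_of_isSeqCompact, fun h f => ?_⟩
  exact ((IsSeqCompact.range f.continuous.seqContinuous).isSeqClosed_of_tendsto_unique h).isClosed
end
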